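/- arXiv:1212.3630 — 3 statements merged into one kernel-verified Lean document; each statement's English description precedes it below -/
import Mathlib

section
/- There exist a natural number N and a polynomial function u : (Fin n → ℝ) × ℝ → ℝ (given by a multivariate polynomial in the n+1 variables (y, x)) such that for every continuous compactly supported function f : (Fin n → ℝ) × ℝ → ℂ and every constant C ≥ 0 satisfying |u(y,x)| · ‖f(y,x)‖ ≤ C for all (y,x) ∈ (Fin n → ℝ) × ℝ, one has ∫⁻_{y ∈ Y₀} ‖(∏ i, |y i| ^ (r i)) · f(y, (p y)⁻¹)‖ dy ≤ C (an inequality of extended-real Lebesgue integrals). (This is the key estimate in the proof of the paper's Lemma 6.2: the distribution i_*(|ω|) attached to the monomial data is a Schwartz distribution.) -/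
/-!
On `Y₀` we have `|x| = |p y|⁻¹` at `x = (p y)⁻¹`, so for `N` large the weight `∏ |y i| ^ r i`
equals `∏ |y i| ^ a i * |x| ^ N` with natural exponents `a i = r i + N * l i`: the negative powers
of the `y i` are absorbed by a power of `x`. Taking
`u = π ^ n * ∏ (y i ^ 2 + 1) * y i ^ a i * x ^ N`, the hypothesis `|u| * ‖f‖ ≤ C` bounds
the integrand by `C` times the product of standard Cauchy densities, which has integral `1`.
-/

open MeasureTheory ProbabilityTheory Real

section

variable {ι : Type*} [Fintype ι]

lemma exists_natCast_eq_add_mul (l : ι → ℕ) (r : ι → ℤ) (hlr : ∀ i, l i = 0 → 0 ≤ r i) :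
    ∃ (N : ℕ) (a : ι → ℕ), ∀ i, (a i : ℤ) = r i + N * l i := by
  classical
  let N := Finset.univ.sup fun i => (-r i).toNat
  refine ⟨N, fun i => (r i + N * l i).toNat, fun i => Int.toNat_of_nonneg ?_⟩
  rcases Nat.eq_zero_or_pos (l i) with hl | hl
  · simpa [hl] using hlr i hl
  · have hN : -r i ≤ N := (Int.self_le_toNat _).trans
      (by exact_mod_cast Finset.le_sup (f := fun i => (-r i).toNat) (Finset.mem_univ i))
    nlinarith [(by exact_mod_cast hl : (1 : ℤ) ≤ l i)]

lemma prod_abs_zpow_eq_mul_abs_inv_pow {l a : ι → ℕ} {r : ι → ℤ} {N : ℕ}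
    (ha : ∀ i, (a i : ℤ) = r i + N * l i) {y : ι → ℝ} (hy : ∏ i, y i ^ l i ≠ 0) :
    ∏ i, |y i| ^ r i = (∏ i, |y i| ^ a i) * |(∏ i, y i ^ l i)⁻¹| ^ N := by
  rw [abs_inv, Finset.abs_prod, inv_pow, ← Finset.prod_pow, ← Finset.prod_inv_distrib,
    ← Finset.prod_mul_distrib]
  refine Finset.prod_congr rfl fun i _ => ?_
  rcases Nat.eq_zero_or_pos (l i) with hl | hl
  · rw [hl, ← zpow_natCast, ha i, hl]
    simp
  · have hyi : |y i| ≠ 0 := abs_ne_zero.mpr fun h0 =>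
      hy (Finset.prod_eq_zero (Finset.mem_univ i) (by simp [h0, hl.ne']))
    rw [abs_pow, ← pow_mul, ← zpow_natCast, ← zpow_natCast, ← zpow_neg, ← zpow_add₀ hyi, ha i]
    push_cast
    ring_nf

lemma lintegral_ofReal_prod_cauchyPDFReal (x₀ : ℝ) {γ : NNReal} (hγ : γ ≠ 0) :
    ∫⁻ y : ι → ℝ, ENNReal.ofReal (∏ i, cauchyPDFReal x₀ γ (y i)) = 1 := by
  rw [volume_pi, ← ofReal_integral_eq_lintegral_ofReal
    (Integrable.fintype_prod fun _ => integrable_cauchyPDFReal x₀)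
    (ae_of_all _ fun _ => Finset.prod_nonneg fun i _ => (cauchyPDF_pos x₀ hγ _).le),
    integral_fintype_prod_eq_pow, integral_cauchyPDFReal_eq_one x₀ hγ]
  simp

end

noncomputable def cauchyWeightPoly (n N : ℕ) (a : Fin n → ℕ) : MvPolynomial (Fin (n + 1)) ℝ :=
  MvPolynomial.C (π ^ n) *
    (∏ i : Fin n, (MvPolynomial.X i.castSucc ^ 2 + 1) * MvPolynomial.X i.castSucc ^ a i) *
    MvPolynomial.X (Fin.last n) ^ N

lemma cauchyPDFReal_zero_one (t : ℝ) : cauchyPDFReal 0 1 t = (π * (t ^ 2 + 1))⁻¹ := by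
  simp [cauchyPDFReal_def, mul_comm]

lemma abs_eval_snoc_cauchyWeightPoly {n N : ℕ} (a : Fin n → ℕ) (y : Fin n → ℝ) (x : ℝ) :
    |MvPolynomial.eval (Fin.snoc y x) (cauchyWeightPoly n N a)| =
      (∏ i, |y i| ^ a i) * |x| ^ N / ∏ i, cauchyPDFReal 0 1 (y i) := by
  simp only [cauchyWeightPoly, cauchyPDFReal_zero_one, map_mul, map_pow, map_prod, map_add,
    map_one, MvPolynomial.eval_C, MvPolynomial.eval_X, Fin.snoc_castSucc, Fin.snoc_last,
    Finset.prod_inv_distrib, div_inv_eq_mul, abs_mul, abs_pow, Finset.abs_prod,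
    abs_of_pos pi_pos, Finset.prod_mul_distrib, Finset.prod_const, Finset.card_univ,
    Fintype.card_fin]
  rw [Finset.prod_congr rfl fun i _ => abs_of_pos (by positivity : (0 : ℝ) < y i ^ 2 + 1)]
  ring

lemma norm_prod_abs_zpow_smul_le {E : Type*} [NormedAddCommGroup E] [NormedSpace ℝ E]
    {n N : ℕ} {l a : Fin n → ℕ} {r : Fin n → ℤ} (ha : ∀ i, (a i : ℤ) = r i + N * l i)
    {y : Fin n → ℝ} (hy : ∏ i, y i ^ l i ≠ 0) {z : E} {C : ℝ}
    (hz : |MvPolynomial.eval (Fin.snoc y (∏ i, y i ^ l i)⁻¹) (cauchyWeightPoly n N a)| * ‖z‖ ≤ C) :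
    ‖(∏ i, |y i| ^ r i) • z‖ ≤ C * ∏ i, cauchyPDFReal 0 1 (y i) := by
  have hρ : 0 < ∏ i, cauchyPDFReal 0 1 (y i) :=
    Finset.prod_pos fun i _ => cauchyPDF_pos 0 one_ne_zero _
  rw [abs_eval_snoc_cauchyWeightPoly, ← prod_abs_zpow_eq_mul_abs_inv_pow ha hy, div_mul_eq_mul_div,
    div_le_iff₀ hρ] at hz
  rwa [norm_smul, Real.norm_of_nonneg (Finset.prod_nonneg fun i _ => by positivity)]

/-- Key estimate in the proof of Lemma 6.2: there are `N : ℕ` and a polynomial `u` in the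
`n+1` variables `(y, x)` such that the monomial density pushed forward under
`y ↦ (y, p(y)⁻¹)` is bounded against test functions dominated by `C / |u|`. -/
theorem stmt_0 (n : ℕ) (l : Fin n → ℕ) (r : Fin n → ℤ)
    (hlr : ∀ i, l i = 0 → 0 ≤ r i) :
    ∃ (N : ℕ) (u : MvPolynomial (Fin (n + 1)) ℝ),
      ∀ f : (Fin n → ℝ) × ℝ → ℂ, Continuous f → HasCompactSupport f →
        ∀ C : ℝ, 0 ≤ C →
          (∀ yx : (Fin n → ℝ) × ℝ,
            |MvPolynomial.eval (Fin.snoc yx.1 yx.2) u| * ‖f yx‖ ≤ C) →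
          (∫⁻ y in {y : Fin n → ℝ | (∏ i, y i ^ l i) ≠ 0},
              (‖(∏ i, |y i| ^ r i) • f (y, (∏ i, y i ^ l i)⁻¹)‖₊ : ENNReal))
            ≤ ENNReal.ofReal C := by
  obtain ⟨N, a, ha⟩ := exists_natCast_eq_add_mul l r hlr
  refine ⟨N, cauchyWeightPoly n N a, fun f _ _ C hC hbound => ?_⟩
  calc ∫⁻ y in {y : Fin n → ℝ | (∏ i, y i ^ l i) ≠ 0},
        (‖(∏ i, |y i| ^ r i) • f (y, (∏ i, y i ^ l i)⁻¹)‖₊ : ENNReal)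
      ≤ ∫⁻ y in {y : Fin n → ℝ | (∏ i, y i ^ l i) ≠ 0},
          ENNReal.ofReal (C * ∏ i, cauchyPDFReal 0 1 (y i)) :=
        setLIntegral_mono (by fun_prop) fun y hy => by
          rw [← enorm_eq_nnnorm, ← ofReal_norm]
          exact ENNReal.ofReal_le_ofReal (norm_prod_abs_zpow_smul_le ha hy (hbound (y, _)))
    _ ≤ ∫⁻ y : Fin n → ℝ, ENNReal.ofReal (C * ∏ i, cauchyPDFReal 0 1 (y i)) :=
        setLIntegral_le_lintegral _ _
    _ = ENNReal.ofReal C := by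
        simp only [ENNReal.ofReal_mul hC]
        rw [lintegral_const_mul _ (by fun_prop), lintegral_ofReal_prod_cauchyPDFReal 0 one_ne_zero,
          mul_one]
end

section
/- There exists a continuous linear functional T : 𝓢((Fin n → ℝ) × ℝ, ℂ) →L[ℂ] ℂ on the Schwartz space such that for every Schwartz function f one has T f = ∫_{y ∈ Y₀} (∏ i, (y i)^(r i)) • f(y, (p y)⁻¹) dy. (The paper's Lemma 6.2: the pushforward of the monomial density under y ↦ (y, p(y)⁻¹) is a tempered/Schwartz distribution.) -/
/-!
On `{p ≠ 0}` every coordinate with `l i > 0` satisfies `|p y| ≤ |y i| (1 + ‖y‖) ^ (∑ l)`, so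
`|y i|⁻¹` is bounded by a power of `1 + ‖(y, (p y)⁻¹)‖`; the coordinates with `l i = 0` only
carry nonnegative exponents. Hence the weight `∏ i, y i ^ r i` grows at most polynomially in the
norm of the graph point `(y, (p y)⁻¹)`, and after multiplying by a high negative power of
`1 + ‖(y, (p y)⁻¹)‖` it is dominated by the integrable `(1 + ‖y‖) ^ (-(n + 1))`. Since a Schwartz
function decays like any negative power, the integral is bounded by finitely many seminorms.
-/

open MeasureTheory

namespace SchwartzMap

variable {α D V : Type*} [NormedAddCommGroup D] [NormedSpace ℝ D]
  [NormedAddCommGroup V] [NormedSpace ℂ V]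

theorem norm_le_one_add_norm_rpow_neg_mul (f : 𝓢(D, V)) (N : ℕ) (x : D) :
    ‖f x‖ ≤ (1 + ‖x‖) ^ (-(N : ℝ)) *
      (2 ^ N * (Finset.Iic (N, 0)).sup (schwartzSeminormFamily ℂ D V) f) := by
  rw [Real.rpow_neg (by positivity), ← div_eq_inv_mul, le_div_iff₀' (by positivity),
    Real.rpow_natCast]
  have h := one_add_le_sup_seminorm_apply (𝕜 := ℂ) (m := (N, 0)) (k := N) (n := 0) le_rfl le_rfl f x
  rwa [norm_iteratedFDeriv_zero] at h

theorem norm_smul_apply_le (f : 𝓢(D, V)) (N : ℕ) (c : ℝ) (x : D) :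
    ‖c • f x‖ ≤ |c| * (1 + ‖x‖) ^ (-(N : ℝ)) *
      (2 ^ N * (Finset.Iic (N, 0)).sup (schwartzSeminormFamily ℂ D V) f) := by
  rw [norm_smul, Real.norm_eq_abs, mul_assoc]
  exact mul_le_mul_of_nonneg_left (f.norm_le_one_add_norm_rpow_neg_mul N x) (abs_nonneg c)

variable [MeasurableSpace α] {ν : Measure α} {Φ : α → D} {w : α → ℝ} {N : ℕ}

theorem integrable_smul_comp (hΦ : AEStronglyMeasurable Φ ν) (hw : AEStronglyMeasurable w ν)
    (hint : Integrable (fun a ↦ |w a| * (1 + ‖Φ a‖) ^ (-(N : ℝ))) ν) (f : 𝓢(D, V)) :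
    Integrable (fun a ↦ w a • f (Φ a)) ν := by
  refine (hint.mul_const (2 ^ N * (Finset.Iic (N, 0)).sup (schwartzSeminormFamily ℂ D V) f)).mono'
    (hw.smul (f.continuous.comp_aestronglyMeasurable hΦ)) ?_
  exact .of_forall fun a ↦ f.norm_smul_apply_le N (w a) (Φ a)

theorem norm_integral_smul_comp_le
    (hint : Integrable (fun a ↦ |w a| * (1 + ‖Φ a‖) ^ (-(N : ℝ))) ν) (f : 𝓢(D, V)) :
    ‖∫ a, w a • f (Φ a) ∂ν‖ ≤ (2 ^ N * ∫ a, |w a| * (1 + ‖Φ a‖) ^ (-(N : ℝ)) ∂ν) *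
      (Finset.Iic (N, 0)).sup (schwartzSeminormFamily ℂ D V) f := by
  calc ‖∫ a, w a • f (Φ a) ∂ν‖ ≤ ∫ a, ‖w a • f (Φ a)‖ ∂ν := norm_integral_le_integral_norm _
    _ ≤ ∫ a, |w a| * (1 + ‖Φ a‖) ^ (-(N : ℝ)) *
          (2 ^ N * (Finset.Iic (N, 0)).sup (schwartzSeminormFamily ℂ D V) f) ∂ν := by
      refine integral_mono_of_nonneg (.of_forall fun _ ↦ norm_nonneg _) (hint.mul_const _)
        (.of_forall fun a ↦ f.norm_smul_apply_le N (w a) (Φ a))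
    _ = _ := by rw [integral_mul_const]; ring

variable (hΦ : AEStronglyMeasurable Φ ν) (hw : AEStronglyMeasurable w ν)
    (hint : Integrable (fun a ↦ |w a| * (1 + ‖Φ a‖) ^ (-(N : ℝ))) ν)

noncomputable def integralSmulCompCLM : 𝓢(D, V) →L[ℂ] V :=
  mkCLMtoNormedSpace (fun f ↦ ∫ a, w a • f (Φ a) ∂ν)
    (fun f g ↦ by
      simp only [add_apply, smul_add]
      exact integral_add (integrable_smul_comp hΦ hw hint f) (integrable_smul_comp hΦ hw hint g))
    (fun c f ↦ by
      simp only [smul_apply, smul_comm (w _) c, RingHom.id_apply]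
      exact integral_smul c _)
    ⟨_, _, by positivity, norm_integral_smul_comp_le hint⟩

theorem integralSmulCompCLM_apply (f : 𝓢(D, V)) :
    integralSmulCompCLM hΦ hw hint f = ∫ a, w a • f (Φ a) ∂ν := rfl

end SchwartzMap

theorem abs_zpow_le_pow_natAbs {x B : ℝ} {r : ℤ} (hx : |x| ≤ B) (hinv : r < 0 → |x|⁻¹ ≤ B) :
    |x ^ r| ≤ B ^ r.natAbs := by
  rcases r with k | k
  · simpa [abs_pow] using pow_le_pow_left₀ (abs_nonneg x) hx k
  · rw [zpow_negSucc, abs_inv, abs_pow, ← inv_pow]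
    exact pow_le_pow_left₀ (by positivity) (hinv (Int.negSucc_lt_zero k)) _

variable {ι : Type*} [Fintype ι]

theorem abs_apply_le_one_add_norm (y : ι → ℝ) (i : ι) : |y i| ≤ 1 + ‖y‖ :=
  ((Real.norm_eq_abs _).symm.trans_le (norm_le_pi_norm y i)).trans
    (le_add_of_nonneg_left zero_le_one)

theorem abs_prod_pow_le_abs_mul_one_add_norm_pow (l : ι → ℕ) (y : ι → ℝ) {i : ι} (hi : l i ≠ 0) :
    |∏ j, y j ^ l j| ≤ |y i| * (1 + ‖y‖) ^ ∑ j, l j := by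
  classical
  have hle : ∀ j, |y j| ^ l j ≤ (Pi.mulSingle i |y i| : ι → ℝ) j * (1 + ‖y‖) ^ l j := by
    intro j
    rcases eq_or_ne j i with rfl | hj
    · obtain ⟨k, hk⟩ := Nat.exists_eq_succ_of_ne_zero hi
      rw [Pi.mulSingle_eq_same, hk, pow_succ']
      gcongr
      calc |y j| ^ k ≤ (1 + ‖y‖) ^ k :=
            pow_le_pow_left₀ (abs_nonneg _) (abs_apply_le_one_add_norm y j) k
        _ ≤ (1 + ‖y‖) ^ (k + 1) :=
          pow_le_pow_right₀ (le_add_of_nonneg_right (norm_nonneg y)) k.le_succ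
    · rw [Pi.mulSingle_eq_of_ne hj, one_mul]
      exact pow_le_pow_left₀ (abs_nonneg _) (abs_apply_le_one_add_norm y j) _
  calc |∏ j, y j ^ l j| = ∏ j, |y j| ^ l j := by simp [Finset.abs_prod, abs_pow]
    _ ≤ ∏ j, (Pi.mulSingle i |y i| : ι → ℝ) j * (1 + ‖y‖) ^ l j :=
      Finset.prod_le_prod (fun j _ ↦ by positivity) fun j _ ↦ hle j
    _ = |y i| * (1 + ‖y‖) ^ ∑ j, l j := by
      rw [Finset.prod_mul_distrib, Finset.prod_pi_mulSingle', if_pos (Finset.mem_univ i),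
        Finset.prod_pow_eq_pow_sum]

theorem abs_prod_zpow_le_one_add_norm_graph_pow (l : ι → ℕ) (r : ι → ℤ)
    (hlr : ∀ i, l i = 0 → 0 ≤ r i) {y : ι → ℝ} (hp : ∏ i, y i ^ l i ≠ 0) :
    |∏ i, y i ^ r i| ≤
      (1 + ‖(y, (∏ i, y i ^ l i)⁻¹)‖) ^ ((∑ i, l i + 1) * ∑ i, (r i).natAbs) := by
  set p := ∏ i, y i ^ l i
  set R := 1 + ‖(y, p⁻¹)‖
  have hR : 1 ≤ R := le_add_of_nonneg_right (norm_nonneg _)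
  have hyR : 1 + ‖y‖ ≤ R := add_le_add_right (norm_fst_le (y, p⁻¹)) 1
  have hpR : |p|⁻¹ ≤ R := by
    rw [← abs_inv, ← Real.norm_eq_abs]
    exact (norm_snd_le (y, p⁻¹)).trans (le_add_of_nonneg_left zero_le_one)
  have habs : ∀ i, |y i| ≤ R ^ (∑ j, l j + 1) := fun i ↦
    calc |y i| ≤ 1 + ‖y‖ := abs_apply_le_one_add_norm y i
      _ ≤ R := hyR
      _ ≤ R ^ (∑ j, l j + 1) := le_self_pow₀ hR (by omega)
  have hinv : ∀ i, l i ≠ 0 → |y i|⁻¹ ≤ R ^ (∑ j, l j + 1) := by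
    intro i hi
    have hp0 : 0 < |p| := abs_pos.mpr hp
    refine inv_le_of_inv_le₀ (by positivity) ?_
    calc (R ^ (∑ j, l j + 1))⁻¹ = (R ^ ∑ j, l j)⁻¹ * R⁻¹ := by rw [pow_succ, mul_inv]
      _ ≤ ((1 + ‖y‖) ^ ∑ j, l j)⁻¹ * |p| := by
        gcongr
        exact inv_le_of_inv_le₀ hp0 hpR
      _ ≤ |y i| := by
        rw [inv_mul_le_iff₀ (by positivity), mul_comm]
        exact abs_prod_pow_le_abs_mul_one_add_norm_pow l y hi
  calc |∏ i, y i ^ r i| = ∏ i, |y i ^ r i| := Finset.abs_prod _ _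
    _ ≤ ∏ i, (R ^ (∑ j, l j + 1)) ^ (r i).natAbs :=
      Finset.prod_le_prod (fun i _ ↦ abs_nonneg _) fun i _ ↦ abs_zpow_le_pow_natAbs (habs i)
        fun hri ↦ hinv i fun hli ↦ (hlr i hli).not_gt hri
    _ = R ^ ((∑ j, l j + 1) * ∑ i, (r i).natAbs) := by
      rw [Finset.prod_pow_eq_pow_sum, pow_mul]

theorem exists_integrable_abs_prod_zpow_mul_one_add_norm_graph_rpow_neg (l : ι → ℕ) (r : ι → ℤ)
    (hlr : ∀ i, l i = 0 → 0 ≤ r i) :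
    ∃ N : ℕ, Integrable (fun y : ι → ℝ ↦
      |∏ i, y i ^ r i| * (1 + ‖(y, (∏ i, y i ^ l i)⁻¹)‖) ^ (-(N : ℝ)))
      (volume.restrict {y | ∏ i, y i ^ l i ≠ 0}) := by
  set K := (∑ i, l i + 1) * ∑ i, (r i).natAbs
  refine ⟨K + (Fintype.card ι + 1), ?_⟩
  have hdom : Integrable (fun y : ι → ℝ ↦ (1 + ‖y‖) ^ (-((Fintype.card ι + 1 : ℕ) : ℝ))) :=
    integrable_one_add_norm (by simp)
  refine hdom.restrict.mono' (by fun_prop) ?_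
  rw [ae_restrict_iff' (by measurability)]
  refine .of_forall fun y (hp : _ ≠ 0) ↦ ?_
  set R := 1 + ‖(y, (∏ i, y i ^ l i)⁻¹)‖
  have hR : 0 < R := by positivity
  calc ‖|∏ i, y i ^ r i| * R ^ (-((K + (Fintype.card ι + 1) : ℕ) : ℝ))‖
      = |∏ i, y i ^ r i| * R ^ (-((K + (Fintype.card ι + 1) : ℕ) : ℝ)) := by
        rw [Real.norm_eq_abs, abs_of_nonneg (by positivity)]
    _ ≤ R ^ (K : ℝ) * R ^ (-((K + (Fintype.card ι + 1) : ℕ) : ℝ)) := by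
        gcongr
        exact_mod_cast abs_prod_zpow_le_one_add_norm_graph_pow l r hlr hp
    _ = R ^ (-((Fintype.card ι + 1 : ℕ) : ℝ)) := by
        rw [← Real.rpow_add hR]; push_cast; ring_nf
    _ ≤ (1 + ‖y‖) ^ (-((Fintype.card ι + 1 : ℕ) : ℝ)) :=
        Real.rpow_le_rpow_of_nonpos (by positivity) (add_le_add_right (norm_fst_le (y, _)) 1)
          (neg_nonpos.mpr (Nat.cast_nonneg _))

/-- Lemma 6.2: the pushforward of the monomial density under `y ↦ (y, p(y)⁻¹)` is a
tempered (Schwartz) distribution: there is a continuous linear functional on Schwartz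
space given by integration against it. -/
theorem stmt_2 (n : ℕ) (l : Fin n → ℕ) (r : Fin n → ℤ)
    (hlr : ∀ i, l i = 0 → 0 ≤ r i) :
    ∃ T : SchwartzMap ((Fin n → ℝ) × ℝ) ℂ →L[ℂ] ℂ,
      ∀ f : SchwartzMap ((Fin n → ℝ) × ℝ) ℂ,
        T f = ∫ y in {y : Fin n → ℝ | (∏ i, y i ^ l i) ≠ 0},
            (∏ i, y i ^ r i : ℝ) • f (y, (∏ i, y i ^ l i)⁻¹) := by
  obtain ⟨N, hint⟩ := exists_integrable_abs_prod_zpow_mul_one_add_norm_graph_rpow_neg l r hlr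
  have hw : Measurable fun y : Fin n → ℝ ↦ ∏ i, y i ^ r i :=
    Finset.measurable_prod _ fun i _ ↦ (measurable_pi_apply i).pow_const (r i)
  exact ⟨SchwartzMap.integralSmulCompCLM (by fun_prop) hw.aestronglyMeasurable hint,
    SchwartzMap.integralSmulCompCLM_apply _ _ hint⟩
end

section
/- Let Z ⊆ (Fin m → ℝ) × (Fin k → ℝ) be a set such that for each i ∈ Fin k there exist N_i ∈ ℕ and polynomials a_{i,0}, …, a_{i,N_i} ∈ MvPolynomial (Fin m) ℝ with (z i)^(N_i + 1) + ∑_{j=0}^{N_i} (MvPolynomial.eval y (a_{i,j})) * (z i)^j = 0 for every (y, z) ∈ Z. Then there exists a polynomial q ∈ MvPolynomial (Fin m) ℝ such that for every (y, z) ∈ Z one has max (⨆ i, |z i|) 1 ≤ MvPolynomial.eval y q. (The paper's Lemma lem:ex_poly: if the fiber coordinates of a set with finite projection are integral over the polynomial ring of the base, then they are polynomially bounded in terms of the base point.) -/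
/-!
A root `x` of a monic polynomial `X^(N+1) + ∑_{j ≤ N} c_j X^j` satisfies the Cauchy-type bound
`|x| ≤ max 1 (∑ |c_j|)`. Since `|c| ≤ c^2 + 1`, the root is also bounded by
`∑ (c_j^2 + 1)`, which is a polynomial expression in the coefficients. When the `c_j` are values
of polynomials at the base point `y`, summing these bounds over the fiber coordinates (plus `1`)
gives the polynomial `q`.
-/

section MonicRoot

variable {R : Type*} [CommRing R] [LinearOrder R] [IsStrictOrderedRing R]

lemma abs_le_max_one_sum_abs_of_monic_root {N : ℕ} {x : R} {c : ℕ → R}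
    (h : x ^ (N + 1) + ∑ j ∈ Finset.range (N + 1), c j * x ^ j = 0) :
    |x| ≤ max 1 (∑ j ∈ Finset.range (N + 1), |c j|) := by
  rcases le_or_gt |x| 1 with hx | hx
  · exact le_max_of_le_left hx
  refine le_max_of_le_right (le_of_mul_le_mul_right ?_ (pow_pos (one_pos.trans hx) N))
  calc |x| * |x| ^ N = |∑ j ∈ Finset.range (N + 1), c j * x ^ j| := by
        rw [← pow_succ', ← abs_pow, eq_neg_of_add_eq_zero_left h, abs_neg]
    _ ≤ ∑ j ∈ Finset.range (N + 1), |c j| * |x| ^ N := by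
        refine (Finset.abs_sum_le_sum_abs _ _).trans (Finset.sum_le_sum fun j hj => ?_)
        rw [abs_mul, abs_pow]
        gcongr
        · exact hx.le
        · exact Finset.mem_range_succ_iff.mp hj
    _ = (∑ j ∈ Finset.range (N + 1), |c j|) * |x| ^ N := (Finset.sum_mul ..).symm

lemma abs_le_sq_add_one (a : R) : |a| ≤ a ^ 2 + 1 := by
  nlinarith [sq_abs a, sq_nonneg (|a| - 1)]

lemma abs_le_sum_sq_add_one_of_monic_root {N : ℕ} {x : R} {c : ℕ → R}
    (h : x ^ (N + 1) + ∑ j ∈ Finset.range (N + 1), c j * x ^ j = 0) :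
    |x| ≤ ∑ j ∈ Finset.range (N + 1), (c j ^ 2 + 1) := by
  refine (abs_le_max_one_sum_abs_of_monic_root h).trans (max_le ?_ ?_)
  · rw [Finset.sum_range_succ']
    have : 0 ≤ ∑ j ∈ Finset.range N, (c (j + 1) ^ 2 + 1) := by positivity
    nlinarith [sq_nonneg (c 0)]
  · exact Finset.sum_le_sum fun j _ => abs_le_sq_add_one (c j)

end MonicRoot

lemma max_iSup_abs_one_le_one_add_sum {ι : Type*} [Fintype ι] {z b : ι → ℝ}
    (h : ∀ i, |z i| ≤ b i) : max (⨆ i, |z i|) 1 ≤ 1 + ∑ i, b i := by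
  have hb : 0 ≤ ∑ i, b i := Finset.sum_nonneg fun i _ => (abs_nonneg _).trans (h i)
  refine max_le (Real.iSup_le (fun i => ?_) (by linarith)) (by linarith)
  have := Finset.single_le_sum (fun j _ => (abs_nonneg _).trans (h j)) (Finset.mem_univ i)
  linarith [h i]

/-- Lemma lem:ex_poly: if each fiber coordinate of a set `Z` with finite projection is
integral over the polynomial ring of the base, then the fiber coordinates are polynomially
bounded in terms of the base point. -/
theorem stmt_8 (m k : ℕ) (Z : Set ((Fin m → ℝ) × (Fin k → ℝ)))
    (hZ : ∀ i : Fin k, ∃ (N : ℕ) (a : ℕ → MvPolynomial (Fin m) ℝ),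
      ∀ yz ∈ Z, yz.2 i ^ (N + 1) +
        ∑ j ∈ Finset.range (N + 1),
          MvPolynomial.eval yz.1 (a j) * yz.2 i ^ j = 0) :
    ∃ q : MvPolynomial (Fin m) ℝ,
      ∀ yz ∈ Z, max (⨆ i, |yz.2 i|) 1 ≤ MvPolynomial.eval yz.1 q := by
  choose N a ha using hZ
  refine ⟨1 + ∑ i, ∑ j ∈ Finset.range (N i + 1), (a i j ^ 2 + 1), fun yz hyz => ?_⟩
  simpa using max_iSup_abs_one_le_one_add_sum fun i =>
    abs_le_sum_sq_add_one_of_monic_root (ha i yz hyz)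
end
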